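/- Let X = Y₀ ⊔ Y₁ ⊔ ⋯ ⊔ Y_s be a partition of a finite alphabet, let k₀,…,k_s ≥ 0 with n = k₀+⋯+k_s, let σ_j be the indicator function of Y_j, and let g and ≤_g be the order of the auxiliary lexicographic construction with constant weight τ = 1. Let C ⊆ Xⁿ, let A be the set of words w = (a₁⋯a_n) ∈ C having at most k_j letters from Y_j for each j = 1,…,s, and let B = C ∩ (Y₀^{k₀} × Y₁^{k₁} × ⋯ × Y_s^{k_s}). Then for every w₁ ∈ B and w₂ ∈ A with w₁ ≤_g w₂, one has w₂ ∈ B. -/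

import Mathlib

def sigmaStar {X : Type*} (σ : X → ℕ) (w : List X) : ℕ :=
  (w.map σ).sum

def sigmaSharp {X : Type*} [Inhabited X] (τ σ : X → ℕ) (w : List X) : ℕ :=
  ∑ i ∈ Finset.range w.length, σ (w.getD i default) * sigmaStar τ (w.take (i + 1))

def keysLe {X : Type*} [LinearOrder X] :
    List (List X → ℕ) → List X → List X → Prop
  | [], w, w' => List.Lex (· < ·) w w' ∨ w = w'
  | k :: ks, w, w' => k w < k w' ∨ (k w = k w' ∧ keysLe ks w w')

/-- The order `≤_g` of the auxiliary lexicographic construction. -/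
def gLe {X : Type*} [Inhabited X] [LinearOrder X] (τ : X → ℕ) {s : ℕ}
    (σ : Fin s → X → ℕ) : List X → List X → Prop :=
  keysLe (sigmaStar τ ::
    (List.finRange s).reverse.flatMap
      (fun j => [sigmaStar (σ j), sigmaSharp τ (σ j)]))

/-!
Among words of length `N` with exactly `m` letters from `S`, the position sum `σ^#` is at most
`N + (N - 1) + ⋯ + (N - m + 1)`, with equality exactly when those letters fill the last `m`
positions. The keys of `≤_g` after the length are read from `Y_s` down to `Y_1`. The word `w₁`
has its `Y_s`-letters in its last `k_s` positions, so it maximises `σ_s^*` among words with at most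
`k_s` such letters, and then `σ_s^#`; hence `w₁ ≤_g w₂` forces `w₂` to tie on both keys, i.e. to
end with a block of `k_s` letters of `Y_s` and to have none elsewhere. Cutting this block off both
words leaves the keys of `Y_1, …, Y_{s-1}` unchanged, so induction places every block, and the
remaining prefix of length `k₀` avoids `Y_1, …, Y_s`, hence lies in `Y₀`.
-/

open Function

theorem List.eq_and_le_of_cons_le_cons {α : Type*} [LinearOrder α] {a b : α} {l l' : List α}
    (h : a :: l ≤ b :: l') (hba : b ≤ a) : a = b ∧ l ≤ l' := by
  rcases h.lt_or_eq with hlt | heq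
  · rcases List.cons_lex_cons_iff.1 hlt with hab | ⟨rfl, htail⟩
    · exact absurd hab hba.not_gt
    · exact ⟨rfl, le_of_lt htail⟩
  · obtain ⟨rfl, rfl⟩ := List.cons_eq_cons.1 heq
    exact ⟨rfl, le_rfl⟩

section

variable {X : Type*}

theorem map_le_map_of_keysLe [LinearOrder X] {ks : List (List X → ℕ)} {w w' : List X}
    (h : keysLe ks w w') : ks.map (· w) ≤ ks.map (· w') := by
  induction ks with
  | nil => exact le_rfl
  | cons k ks ih =>
    rcases h with hlt | ⟨heq, htail⟩
    · exact le_of_lt (List.Lex.rel hlt)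
    · simpa only [List.map_cons, heq] using List.cons_le_cons (k w') (ih htail)

theorem sigmaStar_append (σ : X → ℕ) (u v : List X) :
    sigmaStar σ (u ++ v) = sigmaStar σ u + sigmaStar σ v := by
  simp [sigmaStar]

@[simp]
theorem sigmaStar_singleton (σ : X → ℕ) (a : X) : sigmaStar σ [a] = σ a := by
  simp [sigmaStar]

theorem sigmaStar_one (w : List X) : sigmaStar (fun _ => 1) w = w.length := by
  simp [sigmaStar]

theorem sigmaSharp_append_singleton [Inhabited X] (τ σ : X → ℕ) (w : List X) (a : X) :
    sigmaSharp τ σ (w ++ [a]) = sigmaSharp τ σ w + σ a * sigmaStar τ (w ++ [a]) := by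
  rw [sigmaSharp, List.length_append, List.length_singleton, Finset.sum_range_succ,
    List.getD_append_right _ _ _ _ le_rfl, Nat.sub_self,
    List.take_of_length_le (by simp)]
  congr 1
  refine Finset.sum_congr rfl fun i hi => ?_
  have hi : i < w.length := Finset.mem_range.1 hi
  rw [List.getD_append _ _ _ _ hi, List.take_append_of_le_length hi]

theorem sigmaSharp_append_of_forall_eq_zero [Inhabited X] (τ : X → ℕ) {σ : X → ℕ}
    (u : List X) {v : List X} (hv : ∀ a ∈ v, σ a = 0) :
    sigmaSharp τ σ (u ++ v) = sigmaSharp τ σ u := by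
  induction v using List.reverseRecOn with
  | nil => rw [List.append_nil]
  | append_singleton v a ih =>
    rw [← List.append_assoc, sigmaSharp_append_singleton, hv a (by simp), zero_mul, add_zero,
      ih fun b hb => hv b (by simp [hb])]

theorem sigmaSharp_one_append_singleton [Inhabited X] (σ : X → ℕ) (w : List X) (a : X) :
    sigmaSharp (fun _ => 1) σ (w ++ [a]) = sigmaSharp (fun _ => 1) σ w + σ a * (w.length + 1) := by
  rw [sigmaSharp_append_singleton, sigmaStar_one, List.length_append, List.length_singleton]

-- The largest `σ^#` of `m` marked letters in a word of length `N` (when `m ≤ N`).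
def sumLastPositions (N m : ℕ) : ℕ := ∑ i ∈ Finset.range m, (N - i)

theorem sumLastPositions_succ_succ (N m : ℕ) :
    sumLastPositions (N + 1) (m + 1) = sumLastPositions N m + (N + 1) := by
  simp [sumLastPositions, Finset.sum_range_succ']

theorem sumLastPositions_le_succ_left (N m : ℕ) :
    sumLastPositions N m ≤ sumLastPositions (N + 1) m :=
  Finset.sum_le_sum fun i _ => by omega

theorem sumLastPositions_lt_succ_left (N : ℕ) {m : ℕ} (hm : 0 < m) :
    sumLastPositions N m < sumLastPositions (N + 1) m :=
  Finset.sum_lt_sum (fun i _ => by omega) ⟨0, Finset.mem_range.2 hm, by omega⟩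

section Indicator

variable [DecidableEq X] {S : Finset X}

def indicatorNat (S : Finset X) (a : X) : ℕ := if a ∈ S then 1 else 0

@[simp]
theorem indicatorNat_of_mem {a : X} (h : a ∈ S) : indicatorNat S a = 1 := if_pos h

@[simp]
theorem indicatorNat_of_notMem {a : X} (h : a ∉ S) : indicatorNat S a = 0 := if_neg h

theorem sigmaStar_indicatorNat_eq_countP (S : Finset X) (w : List X) :
    sigmaStar (indicatorNat S) w = w.countP (· ∈ S) := by
  induction w with
  | nil => rfl
  | cons a w ih =>
    rw [List.countP_cons, ← ih, ← List.singleton_append, sigmaStar_append, sigmaStar_singleton]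
    by_cases ha : a ∈ S <;> simp [ha, add_comm]

theorem sigmaStar_indicatorNat_eq_zero_iff {w : List X} :
    sigmaStar (indicatorNat S) w = 0 ↔ ∀ a ∈ w, a ∉ S := by
  simp [sigmaStar_indicatorNat_eq_countP]

theorem sigmaStar_indicatorNat_eq_length {w : List X} (h : ∀ a ∈ w, a ∈ S) :
    sigmaStar (indicatorNat S) w = w.length := by
  simpa [sigmaStar_indicatorNat_eq_countP] using h

variable [Inhabited X]

theorem sigmaSharp_indicatorNat_le (w : List X) :
    sigmaSharp (fun _ => 1) (indicatorNat S) w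
      ≤ sumLastPositions w.length (sigmaStar (indicatorNat S) w) := by
  induction w using List.reverseRecOn with
  | nil => simp [sigmaSharp]
  | append_singleton w a ih =>
    rw [sigmaSharp_one_append_singleton, sigmaStar_append, sigmaStar_singleton,
      List.length_append, List.length_singleton]
    by_cases ha : a ∈ S
    · rw [indicatorNat_of_mem ha, sumLastPositions_succ_succ]
      omega
    · rw [indicatorNat_of_notMem ha, zero_mul, add_zero, add_zero]
      have := sumLastPositions_le_succ_left w.length (sigmaStar (indicatorNat S) w)
      omega

theorem sigmaSharp_indicatorNat_append {u v : List X} (hu : ∀ a ∈ u, a ∉ S)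
    (hv : ∀ a ∈ v, a ∈ S) :
    sigmaSharp (fun _ => 1) (indicatorNat S) (u ++ v)
      = sumLastPositions (u.length + v.length) v.length := by
  induction v using List.reverseRecOn with
  | nil =>
    rw [List.append_nil, ← List.nil_append u,
      sigmaSharp_append_of_forall_eq_zero (σ := indicatorNat S) _ _ fun a ha =>
        indicatorNat_of_notMem (hu a ha)]
    simp [sigmaSharp, sumLastPositions]
  | append_singleton v a ih =>
    rw [← List.append_assoc, sigmaSharp_one_append_singleton,
      ih fun b hb => hv b (List.mem_append_left _ hb), indicatorNat_of_mem (hv a (by simp))]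
    simp only [List.length_append, List.length_singleton, ← add_assoc, sumLastPositions_succ_succ]
    ring

theorem exists_append_of_sigmaSharp_indicatorNat_eq (w : List X)
    (h : sigmaSharp (fun _ => 1) (indicatorNat S) w
      = sumLastPositions w.length (sigmaStar (indicatorNat S) w)) :
    ∃ u v, w = u ++ v ∧ v.length = sigmaStar (indicatorNat S) w ∧ (∀ a ∈ u, a ∉ S) ∧
      ∀ a ∈ v, a ∈ S := by
  induction w using List.reverseRecOn with
  | nil => exact ⟨[], [], rfl, rfl, by simp, by simp⟩
  | append_singleton w a ih =>
    rw [sigmaSharp_one_append_singleton, sigmaStar_append, sigmaStar_singleton,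
      List.length_append, List.length_singleton] at h
    by_cases ha : a ∈ S
    · rw [indicatorNat_of_mem ha, sumLastPositions_succ_succ, one_mul, add_left_inj] at h
      obtain ⟨u, v, rfl, hvlen, hu, hv⟩ := ih h
      refine ⟨u, v ++ [a], by simp, by simp [sigmaStar_append, hvlen, ha, add_assoc], hu, ?_⟩
      simpa [or_imp, forall_and, ha] using hv
    · rw [indicatorNat_of_notMem ha, zero_mul, add_zero, add_zero] at h
      have hcnt : sigmaStar (indicatorNat S) w = 0 := by
        by_contra hne
        have := sigmaSharp_indicatorNat_le (S := S) w
        have := sumLastPositions_lt_succ_left w.length (Nat.pos_of_ne_zero hne)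
        omega
      refine ⟨w ++ [a], [], by simp, by simp [sigmaStar_append, hcnt, ha], ?_, by simp⟩
      simpa [or_imp, forall_and, ha] using sigmaStar_indicatorNat_eq_zero_iff.1 hcnt

end Indicator

section Blocks

variable {ι : Type*}

-- With `T j = Y_{j+1}`, `m j = k_{j+1}`, `I = [0, …, s-1]` and `p = k₀`, these are the words of
-- `Y₀^{k₀} × ⋯ × Y_s^{k_s}` when `Y₀` is the complement of the other blocks.
def IsBlockWord (T : ι → Finset X) (m : ι → ℕ) (I : List ι) (p : ℕ) (w : List X) : Prop :=
  ∃ u f, w = u ++ (I.map f).flatten ∧ u.length = p ∧ (∀ a ∈ u, ∀ i ∈ I, a ∉ T i) ∧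
    ∀ i ∈ I, (f i).length = m i ∧ ∀ a ∈ f i, a ∈ T i

theorem IsBlockWord.append_singleton_iff [DecidableEq ι] {T : ι → Finset X}
    (hT : Pairwise (Disjoint on T)) {m : ι → ℕ} {I : List ι} {j : ι} (hjI : j ∉ I) {p : ℕ}
    {w : List X} :
    IsBlockWord T m (I ++ [j]) p w ↔ ∃ w' v, w = w' ++ v ∧ IsBlockWord T m I p w' ∧
      (∀ a ∈ w', a ∉ T j) ∧ v.length = m j ∧ ∀ a ∈ v, a ∈ T j := by
  constructor
  · rintro ⟨u, f, rfl, hulen, hu, hf⟩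
    refine ⟨u ++ (I.map f).flatten, f j, by simp,
      ⟨u, f, rfl, hulen, fun a ha i hi => hu a ha i (by simp [hi]),
        fun i hi => hf i (by simp [hi])⟩, ?_, hf j (by simp)⟩
    simp only [List.mem_append, List.mem_flatten, List.mem_map]
    rintro a (ha | ⟨_, ⟨i, hi, rfl⟩, ha⟩) haj
    · exact hu a ha j (by simp) haj
    · exact Finset.disjoint_left.1 (hT (ne_of_mem_of_not_mem hi hjI))
        ((hf i (by simp [hi])).2 a ha) haj
  · rintro ⟨_, v, rfl, ⟨u, f, rfl, hulen, hu, hf⟩, hw', hvlen, hv⟩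
    have hmap : I.map (update f j v) = I.map f :=
      List.map_congr_left fun i hi => update_of_ne (ne_of_mem_of_not_mem hi hjI) _ _
    refine ⟨u, update f j v, by simp [hmap], hulen, ?_, ?_⟩
    · intro a ha i hi
      rcases List.mem_append.1 hi with hi | hi
      · exact hu a ha i hi
      · rw [List.mem_singleton.1 hi]
        exact hw' a (List.mem_append_left _ ha)
    · intro i hi
      rcases List.mem_append.1 hi with hi | hi
      · rw [update_of_ne (ne_of_mem_of_not_mem hi hjI)]
        exact hf i hi
      · rw [List.mem_singleton.1 hi, update_self]
        exact ⟨hvlen, hv⟩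

variable [DecidableEq X] [Inhabited X]

-- The keys of `≤_g` after the length, the last block's first.
def blockKeys (T : ι → Finset X) (I : List ι) : List (List X → ℕ) :=
  I.reverse.flatMap fun i =>
    [sigmaStar (indicatorNat (T i)), sigmaSharp (fun _ => 1) (indicatorNat (T i))]

theorem blockKeys_append_singleton (T : ι → Finset X) (I : List ι) (j : ι) :
    blockKeys T (I ++ [j]) = sigmaStar (indicatorNat (T j)) ::
      sigmaSharp (fun _ => 1) (indicatorNat (T j)) :: blockKeys T I := by
  simp [blockKeys]

theorem map_blockKeys_append (T : ι → Finset X) (I : List ι) (w : List X) {v : List X}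
    (hv : ∀ a ∈ v, ∀ i ∈ I, a ∉ T i) :
    (blockKeys T I).map (· (w ++ v)) = (blockKeys T I).map (· w) := by
  refine List.map_congr_left fun key hkey => ?_
  obtain ⟨i, hi, hkey⟩ := List.mem_flatMap.1 hkey
  have hvi : ∀ a ∈ v, a ∉ T i := fun a ha => hv a ha i (List.mem_reverse.1 hi)
  rcases List.mem_pair.1 hkey with rfl | rfl
  · rw [sigmaStar_append, sigmaStar_indicatorNat_eq_zero_iff.2 hvi, add_zero]
  · exact sigmaSharp_append_of_forall_eq_zero _ _ fun a ha => indicatorNat_of_notMem (hvi a ha)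

theorem exists_block_suffix_of_cons_le {S : Finset X} {m : ℕ} {w₁ v₁ w₂ : List X}
    {r₁ r₂ : List ℕ} (hw₁ : ∀ a ∈ w₁, a ∉ S) (hv₁ : v₁.length = m) (hv₁S : ∀ a ∈ v₁, a ∈ S)
    (hlen : w₂.length = (w₁ ++ v₁).length) (hcnt : sigmaStar (indicatorNat S) w₂ ≤ m)
    (hle : sigmaStar (indicatorNat S) (w₁ ++ v₁) ::
        sigmaSharp (fun _ => 1) (indicatorNat S) (w₁ ++ v₁) :: r₁ ≤
      sigmaStar (indicatorNat S) w₂ :: sigmaSharp (fun _ => 1) (indicatorNat S) w₂ :: r₂) :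
    r₁ ≤ r₂ ∧ ∃ w₂' v₂, w₂ = w₂' ++ v₂ ∧ v₂.length = m ∧ (∀ a ∈ w₂', a ∉ S) ∧
      ∀ a ∈ v₂, a ∈ S := by
  have hcnt₁ : sigmaStar (indicatorNat S) (w₁ ++ v₁) = m := by
    rw [sigmaStar_append, sigmaStar_indicatorNat_eq_zero_iff.2 hw₁,
      sigmaStar_indicatorNat_eq_length hv₁S, hv₁, zero_add]
  obtain ⟨hcnt_eq, hle⟩ := List.eq_and_le_of_cons_le_cons hle (hcnt₁ ▸ hcnt)
  have hsharp₁ : sigmaSharp (fun _ => 1) (indicatorNat S) (w₁ ++ v₁)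
      = sumLastPositions w₂.length (sigmaStar (indicatorNat S) w₂) := by
    rw [sigmaSharp_indicatorNat_append hw₁ hv₁S, hlen, ← hcnt_eq, hcnt₁, List.length_append, hv₁]
  obtain ⟨hsharp_eq, hr⟩ := List.eq_and_le_of_cons_le_cons hle
    (hsharp₁ ▸ sigmaSharp_indicatorNat_le w₂)
  obtain ⟨w₂', v₂, hw₂, hv₂, hw₂', hv₂S⟩ :=
    exists_append_of_sigmaSharp_indicatorNat_eq w₂ (hsharp_eq ▸ hsharp₁)
  exact ⟨hr, w₂', v₂, hw₂, by rw [hv₂, ← hcnt_eq, hcnt₁], hw₂', hv₂S⟩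

theorem IsBlockWord.of_map_blockKeys_le [DecidableEq ι] {T : ι → Finset X}
    (hT : Pairwise (Disjoint on T)) {m : ι → ℕ} {I : List ι} (hI : I.Nodup) {p : ℕ}
    {w₁ w₂ : List X} (h₁ : IsBlockWord T m I p w₁) (hlen : w₂.length = w₁.length)
    (hcnt : ∀ i ∈ I, sigmaStar (indicatorNat (T i)) w₂ ≤ m i)
    (hle : (blockKeys T I).map (· w₁) ≤ (blockKeys T I).map (· w₂)) :
    IsBlockWord T m I p w₂ := by
  induction I using List.reverseRecOn generalizing w₁ w₂ with
  | nil =>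
    obtain ⟨u₁, f₁, rfl, hu₁, -⟩ := h₁
    exact ⟨w₂, f₁, by simp, by simpa [hu₁] using hlen, by simp, by simp⟩
  | append_singleton I j ih =>
    obtain ⟨hjI, hI⟩ := (List.nodup_concat I j).1 (List.concat_eq_append ▸ hI)
    have hdisj : ∀ a ∈ T j, ∀ i ∈ I, a ∉ T i := fun a haj i hi hai =>
      Finset.disjoint_left.1 (hT (ne_of_mem_of_not_mem hi hjI)) hai haj
    obtain ⟨w₁, v₁, rfl, h₁, hw₁, hv₁len, hv₁⟩ := (IsBlockWord.append_singleton_iff hT hjI).1 h₁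
    rw [blockKeys_append_singleton, List.map_cons, List.map_cons, List.map_cons,
      List.map_cons] at hle
    obtain ⟨hle, w₂, v₂, rfl, hv₂len, hw₂, hv₂⟩ :=
      exists_block_suffix_of_cons_le hw₁ hv₁len hv₁ hlen (hcnt j (by simp)) hle
    rw [map_blockKeys_append _ _ _ fun a ha => hdisj a (hv₁ a ha),
      map_blockKeys_append _ _ _ fun a ha => hdisj a (hv₂ a ha)] at hle
    have hlen' : w₂.length = w₁.length := by
      rw [List.length_append, List.length_append, hv₁len, hv₂len] at hlen
      omega
    have hcnt' : ∀ i ∈ I, sigmaStar (indicatorNat (T i)) w₂ ≤ m i := fun i hi =>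
      (sigmaStar_append _ _ _ ▸ hcnt i (by simp [hi])).trans' (Nat.le_add_right _ _)
    exact (IsBlockWord.append_singleton_iff hT hjI).2
      ⟨w₂, v₂, rfl, ih hI h₁ hlen' hcnt' hle, hw₂, hv₂len, hv₂⟩

end Blocks

end

theorem stmt_7_general {X : Type*} [Inhabited X] [LinearOrder X] [DecidableEq X]
    {s : ℕ} (Y : Fin (s + 1) → Finset X)
    (hcover : ∀ a : X, ∃ j, a ∈ Y j)
    (hdisj : ∀ j j' : Fin (s + 1), j ≠ j' → Disjoint (Y j) (Y j'))
    (k : Fin (s + 1) → ℕ) (n : ℕ)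
    (C : Set (List X)) (hC : ∀ w ∈ C, w.length = n)
    (A B : Set (List X))
    (hA : ∀ w, w ∈ A ↔ (w ∈ C ∧ ∀ j : Fin s,
      w.countP (fun a => decide (a ∈ Y j.succ)) ≤ k j.succ))
    (hB : ∀ w, w ∈ B ↔ (w ∈ C ∧ ∃ ws : Fin (s + 1) → List X,
      w = (List.ofFn ws).flatten ∧
      ∀ j, (ws j).length = k j ∧ ∀ a ∈ ws j, a ∈ Y j))
    (w₁ w₂ : List X) (hw₁ : w₁ ∈ B) (hw₂ : w₂ ∈ A)
    (hle : gLe (fun _ => 1) (fun j a => if a ∈ Y j.succ then 1 else 0) w₁ w₂) :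
    w₂ ∈ B := by
  obtain ⟨hw₁C, ws₁, rfl, hws₁⟩ := (hB _).1 hw₁
  obtain ⟨hw₂C, hw₂cnt⟩ := (hA w₂).1 hw₂
  have hT : Pairwise (Disjoint on fun j : Fin s => Y j.succ) := fun i j hij =>
    hdisj _ _ (Fin.succ_injective _ |>.ne hij)
  have h₁ : IsBlockWord (fun j => Y j.succ) (fun j => k j.succ) (List.finRange s) (k 0)
      (List.ofFn ws₁).flatten :=
    ⟨ws₁ 0, fun j => ws₁ j.succ, by rw [List.ofFn_succ, List.flatten_cons, List.ofFn_eq_map],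
      (hws₁ 0).1, fun a ha j _ => Finset.disjoint_left.1 (hdisj 0 j.succ (Fin.succ_ne_zero j).symm)
        ((hws₁ 0).2 a ha), fun j _ => hws₁ j.succ⟩
  have hlen : w₂.length = (List.ofFn ws₁).flatten.length := by rw [hC _ hw₂C, hC _ hw₁C]
  have hkeys := List.eq_and_le_of_cons_le_cons
    (map_le_map_of_keysLe (ks := sigmaStar (fun _ => 1) :: blockKeys _ (List.finRange s)) hle)
    (by simp only [sigmaStar_one, hlen, le_rfl])
  obtain ⟨u₂, f₂, rfl, hu₂len, hu₂, hf₂⟩ := h₁.of_map_blockKeys_le hT (List.nodup_finRange s)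
    hlen (fun j _ => (sigmaStar_indicatorNat_eq_countP _ _).trans_le (hw₂cnt j)) hkeys.2
  refine (hB _).2 ⟨hw₂C, Fin.cons u₂ f₂, by simp [List.ofFn_succ, List.ofFn_eq_map],
    Fin.cases ⟨hu₂len, fun a ha => ?_⟩ fun j => hf₂ j (List.mem_finRange j)⟩
  obtain ⟨j, hj⟩ := hcover a
  cases j using Fin.cases with
  | zero => exact hj
  | succ j => exact absurd hj (hu₂ a ha j (List.mem_finRange j))

/-- Proposition: let `X = Y₀ ⊔ ⋯ ⊔ Y_s`, `n = k₀ + ⋯ + k_s`, `σ_j` the indicator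
of `Y_j` (for `j = 1,…,s`), and `≤_g` the lexicographic construction with the
constant weight `τ = 1`.  Let `C ⊆ Xⁿ`, let `A` be the set of words in `C` having
at most `k_j` letters from `Y_j` for each `j = 1,…,s`, and
`B = C ∩ (Y₀^{k₀} × ⋯ × Y_s^{k_s})`.  Then `w₁ ∈ B`, `w₂ ∈ A`, `w₁ ≤_g w₂`
imply `w₂ ∈ B`. -/
theorem stmt_7 {X : Type*} [Inhabited X] [Fintype X] [LinearOrder X] [DecidableEq X]
    {s : ℕ} (Y : Fin (s + 1) → Finset X)
    (hcover : ∀ a : X, ∃ j, a ∈ Y j)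
    (hdisj : ∀ j j' : Fin (s + 1), j ≠ j' → Disjoint (Y j) (Y j'))
    (k : Fin (s + 1) → ℕ) (n : ℕ) (hn : n = ∑ j, k j)
    (C : Set (List X)) (hC : ∀ w ∈ C, w.length = n)
    (A B : Set (List X))
    (hA : ∀ w, w ∈ A ↔ (w ∈ C ∧ ∀ j : Fin s,
      w.countP (fun a => decide (a ∈ Y j.succ)) ≤ k j.succ))
    (hB : ∀ w, w ∈ B ↔ (w ∈ C ∧ ∃ ws : Fin (s + 1) → List X,
      w = (List.ofFn ws).flatten ∧
      ∀ j, (ws j).length = k j ∧ ∀ a ∈ ws j, a ∈ Y j))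
    (w₁ w₂ : List X) (hw₁ : w₁ ∈ B) (hw₂ : w₂ ∈ A)
    (hle : gLe (fun _ => 1) (fun j a => if a ∈ Y j.succ then 1 else 0) w₁ w₂) :
    w₂ ∈ B :=
  stmt_7_general Y hcover hdisj k n C hC A B hA hB w₁ w₂ hw₁ hw₂ hle
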